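/- arXiv:1906.09347 — 6 statements merged into one kernel-verified Lean document; each statement's English description precedes it below -/
import Mathlib

section
/- Suppose μ₁ < μ₂ and −1 < ρ < 0. Then the infimum of g(t,s) over (t,s) ∈ (0,∞)² equals 4(μ₂+(1−2ρ)μ₁), and ((1−2ρ)/μ₁, 1/(μ₂−2ρμ₁)) is the unique minimizer of g on (0,∞)². -/
/-!
For `ρ ≤ 0` every entry of `Σ_{ts}⁻¹` is nonnegative, so the quadratic form is monotone on the
positive quadrant and the infimum defining `g(t,s)` is attained at the corner
`(1 + μ₁ t, 1 + μ₂ s)`. On `s ≤ t`, where `det Σ_{ts} = s (t - ρ² s)`, the difference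
`(g(t,s) - 4(μ₂ + (1 - 2ρ)μ₁)) · det Σ_{ts}` is a sum of two squares with positive weights,
and both squares vanish exactly when `μ₁ t = 1 - 2ρ` and `s (μ₂ - 2ρμ₁) = 1`. On `t ≤ s` the
symmetric identity gives the bound `4(μ₁ + (1 - 2ρ)μ₂)`, which is strictly larger because
`ρ < 0` and `μ₁ < μ₂`.
-/

open Matrix

/-- The covariance matrix of `(X₁(t), X₂(s))`. -/
noncomputable def covM (ρ t s : ℝ) : Matrix (Fin 2) (Fin 2) ℝ :=
  !![t, ρ * min t s; ρ * min t s, s]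

/-- The quadratic form `(x,y) Σ_{ts}⁻¹ (x,y)ᵀ`. -/
noncomputable def quadF (ρ t s x y : ℝ) : ℝ :=
  dotProduct ![x, y] ((covM ρ t s)⁻¹.mulVec ![x, y])

/-- `g(t,s) = inf{ (x,y) Σ_{ts}⁻¹ (x,y)ᵀ : x ≥ 1+μ₁t, y ≥ 1+μ₂s }`. -/
noncomputable def gFun (μ₁ μ₂ ρ t s : ℝ) : ℝ :=
  sInf { q : ℝ | ∃ x y : ℝ, 1 + μ₁ * t ≤ x ∧ 1 + μ₂ * s ≤ y ∧ q = quadF ρ t s x y }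

/-- Holds without any invertibility assumption: a singular matrix has inverse `0`, and `x / 0 = 0`. -/
theorem dotProduct_inv_mulVec_fin_two {K : Type*} [Field K] (a b c x y : K) :
    ![x, y] ⬝ᵥ (!![a, c; c, b]⁻¹ *ᵥ ![x, y]) =
      (b * x ^ 2 - 2 * c * x * y + a * y ^ 2) / (a * b - c ^ 2) := by
  rw [inv_def, Ring.inverse_eq_inv', det_fin_two_of, adjugate_fin_two_of]
  simp [mulVec, dotProduct, Fin.sum_univ_two]
  ring

theorem quadF_eq (ρ t s x y : ℝ) :
    quadF ρ t s x y = (s * x ^ 2 - 2 * (ρ * min t s) * x * y + t * y ^ 2) /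
      (t * s - (ρ * min t s) ^ 2) :=
  dotProduct_inv_mulVec_fin_two _ _ _ _ _

theorem mul_sub_sq_mul_min_pos {ρ t s : ℝ} (hρ : |ρ| < 1) (ht : 0 < t) (hs : 0 < s) :
    0 < t * s - (ρ * min t s) ^ 2 := by
  have hρ2 : ρ ^ 2 < 1 := (sq_lt_one_iff_abs_lt_one ρ).mpr hρ
  have hm : 0 < min t s := lt_min ht hs
  refine sub_pos.mpr ?_
  calc (ρ * min t s) ^ 2 = ρ ^ 2 * (min t s * min t s) := by ring
    _ < 1 * (min t s * min t s) := by gcongr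
    _ ≤ t * s := by simpa using mul_le_mul (min_le_left t s) (min_le_right t s) hm.le ht.le

theorem quadF_mono {ρ t s a b x y : ℝ} (hρ : |ρ| < 1) (hρ0 : ρ ≤ 0) (ht : 0 < t) (hs : 0 < s)
    (ha : 0 ≤ a) (hax : a ≤ x) (hb : 0 ≤ b) (hby : b ≤ y) :
    quadF ρ t s a b ≤ quadF ρ t s x y := by
  have hD := mul_sub_sq_mul_min_pos hρ ht hs
  have hc : 0 ≤ -(ρ * min t s) := by nlinarith [lt_min ht hs]
  rw [quadF_eq, quadF_eq, div_le_div_iff_of_pos_right hD]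
  nlinarith [mul_self_le_mul_self ha hax, mul_self_le_mul_self hb hby,
    mul_nonneg hc (sub_nonneg.mpr (mul_le_mul hax hby hb (ha.trans hax)))]

noncomputable def gCorner (μ₁ μ₂ ρ t s : ℝ) : ℝ :=
  quadF ρ t s (1 + μ₁ * t) (1 + μ₂ * s)

theorem gCorner_comm (μ₁ μ₂ ρ t s : ℝ) : gCorner μ₁ μ₂ ρ t s = gCorner μ₂ μ₁ ρ s t := by
  rw [gCorner, gCorner, quadF_eq, quadF_eq, min_comm]
  ring_nf

theorem gFun_eq_gCorner {μ₁ μ₂ ρ t s : ℝ} (hμ₁ : 0 ≤ μ₁) (hμ₂ : 0 ≤ μ₂) (hρ : |ρ| < 1)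
    (hρ0 : ρ ≤ 0) (ht : 0 < t) (hs : 0 < s) :
    gFun μ₁ μ₂ ρ t s = gCorner μ₁ μ₂ ρ t s := by
  refine IsLeast.csInf_eq ⟨⟨_, _, le_rfl, le_rfl, rfl⟩, ?_⟩
  rintro q ⟨x, y, hx, hy, rfl⟩
  exact quadF_mono hρ hρ0 ht hs (by positivity) hx (by positivity) hy

theorem gCorner_sub_mul_det {μ₁ μ₂ ρ t s : ℝ} (hst : s ≤ t) (hD : t * s - (ρ * s) ^ 2 ≠ 0) :
    (gCorner μ₁ μ₂ ρ t s - 4 * (μ₂ + (1 - 2 * ρ) * μ₁)) * (t * s - (ρ * s) ^ 2) =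
      s * (1 - 2 * ρ - μ₁ * t - ρ * (s * (μ₂ - 2 * ρ * μ₁) - 1)) ^ 2 +
        (t - ρ ^ 2 * s) * (1 - s * (μ₂ - 2 * ρ * μ₁)) ^ 2 := by
  rw [gCorner, quadF_eq, min_eq_right hst, sub_mul, div_mul_cancel₀ _ hD]
  ring

theorem le_gCorner_and_eq_iff_of_le {μ₁ μ₂ ρ t s : ℝ} (hρ : |ρ| < 1) (hs : 0 < s) (hst : s ≤ t) :
    4 * (μ₂ + (1 - 2 * ρ) * μ₁) ≤ gCorner μ₁ μ₂ ρ t s ∧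
      (gCorner μ₁ μ₂ ρ t s = 4 * (μ₂ + (1 - 2 * ρ) * μ₁) ↔
        μ₁ * t = 1 - 2 * ρ ∧ s * (μ₂ - 2 * ρ * μ₁) = 1) := by
  have hD := mul_sub_sq_mul_min_pos hρ (hs.trans_le hst) hs
  rw [min_eq_right hst] at hD
  have htρ : 0 < t - ρ ^ 2 * s := by
    nlinarith [(sq_lt_one_iff_abs_lt_one ρ).mpr hρ]
  have key := gCorner_sub_mul_det (μ₁ := μ₁) (μ₂ := μ₂) hst hD.ne'
  set X := 1 - 2 * ρ - μ₁ * t - ρ * (s * (μ₂ - 2 * ρ * μ₁) - 1)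
  set Y := 1 - s * (μ₂ - 2 * ρ * μ₁)
  refine ⟨?_, ⟨fun h => ?_, fun ⟨h₁, h₂⟩ => ?_⟩⟩
  · have hprod : 0 ≤ (gCorner μ₁ μ₂ ρ t s - 4 * (μ₂ + (1 - 2 * ρ) * μ₁)) *
        (t * s - (ρ * s) ^ 2) := key ▸ by positivity
    exact sub_nonneg.mp (nonneg_of_mul_nonneg_left hprod hD)
  · rw [h, sub_self, zero_mul, eq_comm] at key
    obtain ⟨hX, hY⟩ := (add_eq_zero_iff_of_nonneg (by positivity) (by positivity)).mp key
    replace hX : X = 0 := by simpa [hs.ne'] using hX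
    replace hY : Y = 0 := by simpa [htρ.ne'] using hY
    exact ⟨by linear_combination -hX + ρ * hY, by linear_combination -hY⟩
  · have hX : X = 0 := by linear_combination -h₁ - ρ * h₂
    have hY : Y = 0 := by linear_combination -h₂
    rw [hX, hY] at key
    simpa [hD.ne', sub_eq_zero] using key

theorem lt_gCorner_of_le {μ₁ μ₂ ρ t s : ℝ} (hμ₁₂ : μ₁ < μ₂) (hρ : |ρ| < 1) (hρ0 : ρ < 0)
    (ht : 0 < t) (hts : t ≤ s) :
    4 * (μ₂ + (1 - 2 * ρ) * μ₁) < gCorner μ₁ μ₂ ρ t s := by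
  rw [gCorner_comm]
  calc 4 * (μ₂ + (1 - 2 * ρ) * μ₁) < 4 * (μ₁ + (1 - 2 * ρ) * μ₂) := by nlinarith
    _ ≤ gCorner μ₂ μ₁ ρ s t := (le_gCorner_and_eq_iff_of_le hρ ht hts).1

theorem le_gFun_and_eq_iff {μ₁ μ₂ ρ t s : ℝ} (hμ₁ : 0 < μ₁) (hμ₁₂ : μ₁ < μ₂) (hρl : -1 < ρ)
    (hρu : ρ < 0) (ht : 0 < t) (hs : 0 < s) :
    4 * (μ₂ + (1 - 2 * ρ) * μ₁) ≤ gFun μ₁ μ₂ ρ t s ∧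
      (gFun μ₁ μ₂ ρ t s = 4 * (μ₂ + (1 - 2 * ρ) * μ₁) ↔
        μ₁ * t = 1 - 2 * ρ ∧ s * (μ₂ - 2 * ρ * μ₁) = 1) := by
  have hρ : |ρ| < 1 := abs_lt.mpr ⟨hρl, by linarith⟩
  rw [gFun_eq_gCorner hμ₁.le (hμ₁.trans hμ₁₂).le hρ hρu.le ht hs]
  rcases le_total s t with hst | hts
  · exact le_gCorner_and_eq_iff_of_le hρ hs hst
  · have hlt := lt_gCorner_of_le hμ₁₂ hρ hρu ht hts
    refine ⟨hlt.le, fun h => absurd h hlt.ne', fun ⟨h₁, h₂⟩ => absurd hts ?_⟩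
    -- `μ₁ s < (μ₂ - 2ρμ₁) s = 1 < 1 - 2ρ = μ₁ t`
    have hk : μ₁ < μ₂ - 2 * ρ * μ₁ := by nlinarith
    nlinarith [mul_lt_mul_of_pos_right hk hs]

theorem stmt1 (μ₁ μ₂ ρ : ℝ) (hμ1 : 0 < μ₁) (hμ12 : μ₁ < μ₂)
    (hρl : -1 < ρ) (hρu : ρ < 0) :
    IsLeast { v : ℝ | ∃ t s : ℝ, 0 < t ∧ 0 < s ∧ v = gFun μ₁ μ₂ ρ t s }
      (4 * (μ₂ + (1 - 2 * ρ) * μ₁)) ∧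
    (gFun μ₁ μ₂ ρ ((1 - 2 * ρ) / μ₁) (1 / (μ₂ - 2 * ρ * μ₁))
        = 4 * (μ₂ + (1 - 2 * ρ) * μ₁)) ∧
    (∀ t s : ℝ, 0 < t → 0 < s →
      gFun μ₁ μ₂ ρ t s = 4 * (μ₂ + (1 - 2 * ρ) * μ₁) →
      t = (1 - 2 * ρ) / μ₁ ∧ s = 1 / (μ₂ - 2 * ρ * μ₁)) := by
  have hk : 0 < μ₂ - 2 * ρ * μ₁ := by nlinarith
  have ht₀ : 0 < (1 - 2 * ρ) / μ₁ := div_pos (by linarith) hμ1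
  have hs₀ : 0 < 1 / (μ₂ - 2 * ρ * μ₁) := one_div_pos.mpr hk
  have hval := (le_gFun_and_eq_iff hμ1 hμ12 hρl hρu ht₀ hs₀).2.2
    ⟨mul_div_cancel₀ _ hμ1.ne', one_div_mul_cancel hk.ne'⟩
  refine ⟨⟨⟨_, _, ht₀, hs₀, hval.symm⟩, ?_⟩, hval, ?_⟩
  · rintro v ⟨t, s, ht, hs, rfl⟩
    exact (le_gFun_and_eq_iff hμ1 hμ12 hρl hρu ht hs).1
  · intro t s ht hs h
    obtain ⟨h₁, h₂⟩ := (le_gFun_and_eq_iff hμ1 hμ12 hρl hρu ht hs).2.1 h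
    exact ⟨eq_div_of_mul_eq hμ1.ne' (by linarith), eq_one_div_of_mul_eq_one_left h₂⟩
end

section
/- Suppose ρ̂₂ < ρ < 1 (which forces μ₁ < μ₂). Then the infimum of g(t,s) over (t,s) ∈ (0,∞)² equals 4μ₂ = g₂(1/μ₂), and this infimum is attained: g(t, 1/μ₂) = 4μ₂ for every t with w₁(1/μ₂) ≤ t ≤ f₁(1/μ₂). -/
open Matrix

/-- `g₃(t,s)`: the quadratic form at the corner point `(1+μ₁t, 1+μ₂s)`. -/
noncomputable def g3Fun (μ₁ μ₂ ρ t s : ℝ) : ℝ :=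
  quadF ρ t s (1 + μ₁ * t) (1 + μ₂ * s)

/-- `g₂(s) = (1+μ₂s)²/s`. -/
noncomputable def g2Fun (μ₂ s : ℝ) : ℝ := (1 + μ₂ * s) ^ 2 / s

/-- `f₁(s) = (ρ−1)/μ₁ + (ρμ₂/μ₁)s`. -/
noncomputable def f1Fun (μ₁ μ₂ ρ s : ℝ) : ℝ := (ρ - 1) / μ₁ + ρ * μ₂ / μ₁ * s

/-- `w₁(s) = s/(ρ + (ρμ₂−μ₁)s)`. -/
noncomputable def w1Fun (μ₁ μ₂ ρ s : ℝ) : ℝ := s / (ρ + (ρ * μ₂ - μ₁) * s)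

/-! Completing the square in `x` gives `(x,y) Σ⁻¹ (x,y)ᵀ ≥ y²/s`, with equality at the
conditional mean `x = ρ min(t,s) y / s`; hence `g(t,s) ≥ g₂(s) ≥ 4μ₂` (AM-GM, equality at
`s = 1/μ₂`). On `s = 1/μ₂` with `w₁ ≤ t ≤ f₁` the conditional mean for `y = 1 + μ₂s = 2`
is feasible, so the bound is attained. -/

lemma dotProduct_inv_fin_two_mulVec (a b c x y : ℝ) (hb : b ≠ 0) (hdet : a * b - c ^ 2 ≠ 0) :
    ![x, y] ⬝ᵥ ((!![a, c; c, b])⁻¹ *ᵥ ![x, y]) =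
      (b * x - c * y) ^ 2 / (b * (a * b - c ^ 2)) + y ^ 2 / b := by
  rw [Matrix.inv_def]
  simp only [dotProduct, mulVec, det_fin_two_of, Ring.inverse_eq_inv', adjugate_fin_two_of,
    Matrix.smul_apply, of_apply, cons_val', cons_val_fin_one, smul_eq_mul, Fin.sum_univ_two,
    cons_val_zero, cons_val_one]
  field_simp
  ring

section CovarianceForm

variable {ρ t s : ℝ}

lemma covM_det_pos (ht : 0 < t) (hs : 0 < s) (hρl : -1 < ρ) (hρu : ρ < 1) :
    0 < t * s - (ρ * min t s) ^ 2 := by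
  have hm : 0 < min t s := lt_min ht hs
  have hmm : min t s * min t s ≤ t * s :=
    mul_le_mul (min_le_left t s) (min_le_right t s) hm.le ht.le
  have hρ2 : ρ ^ 2 < 1 := by nlinarith
  nlinarith [mul_pos hm hm]

lemma quadF_eq_sq_add (x y : ℝ) (ht : 0 < t) (hs : 0 < s) (hρl : -1 < ρ) (hρu : ρ < 1) :
    quadF ρ t s x y =
      (s * x - ρ * min t s * y) ^ 2 / (s * (t * s - (ρ * min t s) ^ 2)) + y ^ 2 / s :=
  dotProduct_inv_fin_two_mulVec _ _ _ x y hs.ne' (covM_det_pos ht hs hρl hρu).ne'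

lemma sq_div_le_quadF (x y : ℝ) (ht : 0 < t) (hs : 0 < s) (hρl : -1 < ρ) (hρu : ρ < 1) :
    y ^ 2 / s ≤ quadF ρ t s x y := by
  have hD := covM_det_pos ht hs hρl hρu
  rw [quadF_eq_sq_add x y ht hs hρl hρu]
  exact le_add_of_nonneg_left (by positivity)

lemma quadF_at_conditional_mean (y : ℝ) (ht : 0 < t) (hs : 0 < s) (hρl : -1 < ρ) (hρu : ρ < 1) :
    quadF ρ t s (ρ * min t s * y / s) y = y ^ 2 / s := by
  rw [quadF_eq_sq_add _ y ht hs hρl hρu, mul_div_cancel₀ _ hs.ne', sub_self]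
  simp

end CovarianceForm

section Infimum

variable {μ₁ μ₂ ρ t s : ℝ}

lemma g2Fun_le_gFun (hμ₂ : 0 ≤ μ₂) (ht : 0 < t) (hs : 0 < s) (hρl : -1 < ρ) (hρu : ρ < 1) :
    g2Fun μ₂ s ≤ gFun μ₁ μ₂ ρ t s := by
  refine le_csInf ⟨_, 1 + μ₁ * t, 1 + μ₂ * s, le_rfl, le_rfl, rfl⟩ ?_
  rintro q ⟨x, y, -, hy, rfl⟩
  calc g2Fun μ₂ s ≤ y ^ 2 / s := by unfold g2Fun; gcongr
    _ ≤ quadF ρ t s x y := sq_div_le_quadF x y ht hs hρl hρu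

lemma gFun_le_quadF {x y : ℝ} (ht : 0 < t) (hs : 0 < s) (hρl : -1 < ρ) (hρu : ρ < 1)
    (hx : 1 + μ₁ * t ≤ x) (hy : 1 + μ₂ * s ≤ y) : gFun μ₁ μ₂ ρ t s ≤ quadF ρ t s x y := by
  refine csInf_le ⟨0, ?_⟩ ⟨x, y, hx, hy, rfl⟩
  rintro q ⟨x', y', -, -, rfl⟩
  exact (div_nonneg (sq_nonneg y') hs.le).trans (sq_div_le_quadF x' y' ht hs hρl hρu)

/-- The infimum equals `g₂(s)` as soon as the conditional mean of `X₁(t)` given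
`X₂(s) = 1 + μ₂s` clears the barrier `1 + μ₁t`. -/
lemma gFun_eq_g2Fun (hμ₂ : 0 ≤ μ₂) (ht : 0 < t) (hs : 0 < s) (hρl : -1 < ρ) (hρu : ρ < 1)
    (hmean : 1 + μ₁ * t ≤ ρ * min t s * (1 + μ₂ * s) / s) :
    gFun μ₁ μ₂ ρ t s = g2Fun μ₂ s := by
  refine le_antisymm ?_ (g2Fun_le_gFun hμ₂ ht hs hρl hρu)
  calc gFun μ₁ μ₂ ρ t s ≤ quadF ρ t s (ρ * min t s * (1 + μ₂ * s) / s) (1 + μ₂ * s) :=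
        gFun_le_quadF ht hs hρl hρu hmean le_rfl
    _ = g2Fun μ₂ s := quadF_at_conditional_mean _ ht hs hρl hρu

lemma four_mul_le_g2Fun (hs : 0 < s) : 4 * μ₂ ≤ g2Fun μ₂ s := by
  rw [g2Fun, le_div_iff₀ hs]
  nlinarith [sq_nonneg (1 - μ₂ * s)]

lemma g2Fun_one_div (hμ₂ : 0 < μ₂) : g2Fun μ₂ (1 / μ₂) = 4 * μ₂ := by
  unfold g2Fun
  field_simp
  norm_num

end Infimum

section Window

variable {μ₁ μ₂ ρ t : ℝ}

lemma w1Fun_one_div (hμ₂ : 0 < μ₂) : w1Fun μ₁ μ₂ ρ (1 / μ₂) = 1 / (2 * ρ * μ₂ - μ₁) := by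
  unfold w1Fun
  rw [show ρ + (ρ * μ₂ - μ₁) * (1 / μ₂) = (2 * ρ * μ₂ - μ₁) / μ₂ by field_simp; ring,
    div_div_div_eq, one_mul, div_mul_cancel_left₀ hμ₂.ne', one_div]

lemma f1Fun_one_div (hμ₁ : 0 < μ₁) (hμ₂ : 0 < μ₂) :
    f1Fun μ₁ μ₂ ρ (1 / μ₂) = (2 * ρ - 1) / μ₁ := by
  unfold f1Fun
  field_simp
  ring

/-- On `s = 1/μ₂` the condition of `gFun_eq_g2Fun` reads `1 + μ₁t ≤ 2ρμ₂ min(t, 1/μ₂)`: for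
`t ≤ 1/μ₂` this is `t ≥ w₁(1/μ₂)`, for `t ≥ 1/μ₂` it is `t ≤ f₁(1/μ₂)`. -/
lemma mean_condition_of_mem_window (hμ₁ : 0 < μ₁) (hμ₂ : 0 < μ₂) (hρ : μ₁ < 2 * ρ * μ₂)
    (hw : w1Fun μ₁ μ₂ ρ (1 / μ₂) ≤ t) (hf : t ≤ f1Fun μ₁ μ₂ ρ (1 / μ₂)) :
    1 + μ₁ * t ≤ ρ * min t (1 / μ₂) * (1 + μ₂ * (1 / μ₂)) / (1 / μ₂) := by
  have hd : 0 < 2 * ρ * μ₂ - μ₁ := sub_pos.mpr hρ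
  rw [mul_one_div_cancel hμ₂.ne', div_div_eq_mul_div, div_one]
  rcases le_total t (1 / μ₂) with h | h
  · rw [min_eq_left h]
    rw [w1Fun_one_div hμ₂, div_le_iff₀ hd] at hw
    linarith
  · rw [min_eq_right h]
    rw [f1Fun_one_div hμ₁ hμ₂, le_div_iff₀ hμ₁] at hf
    field_simp
    linarith

lemma pos_of_mem_window (hμ₂ : 0 < μ₂) (hρ : μ₁ < 2 * ρ * μ₂)
    (hw : w1Fun μ₁ μ₂ ρ (1 / μ₂) ≤ t) : 0 < t := by
  rw [w1Fun_one_div hμ₂] at hw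
  exact lt_of_lt_of_le (one_div_pos.mpr (sub_pos.mpr hρ)) hw

end Window

theorem stmt7 (μ₁ μ₂ ρ : ℝ) (hμ1 : 0 < μ₁) (hμ12 : μ₁ ≤ μ₂)
    (hρl : -1 < ρ) (hρu : ρ < 1) (hρ2 : (μ₁ + μ₂) / (2 * μ₂) < ρ) :
    IsLeast { v : ℝ | ∃ t s : ℝ, 0 < t ∧ 0 < s ∧ v = gFun μ₁ μ₂ ρ t s } (4 * μ₂) ∧
    g2Fun μ₂ (1 / μ₂) = 4 * μ₂ ∧
    (∀ t : ℝ, w1Fun μ₁ μ₂ ρ (1 / μ₂) ≤ t → t ≤ f1Fun μ₁ μ₂ ρ (1 / μ₂) →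
      gFun μ₁ μ₂ ρ t (1 / μ₂) = 4 * μ₂) := by
  have hμ2 : 0 < μ₂ := hμ1.trans_le hμ12
  have hρμ : μ₁ + μ₂ < 2 * ρ * μ₂ := by
    rw [div_lt_iff₀ (by positivity)] at hρ2
    linarith
  have hattain : ∀ t, w1Fun μ₁ μ₂ ρ (1 / μ₂) ≤ t → t ≤ f1Fun μ₁ μ₂ ρ (1 / μ₂) →
      gFun μ₁ μ₂ ρ t (1 / μ₂) = 4 * μ₂ := fun t hw hf => by
    rw [gFun_eq_g2Fun hμ2.le (pos_of_mem_window hμ2 (by linarith) hw) (by positivity) hρl hρu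
      (mean_condition_of_mem_window hμ1 hμ2 (by linarith) hw hf), g2Fun_one_div hμ2]
  have hw : w1Fun μ₁ μ₂ ρ (1 / μ₂) ≤ 1 / μ₂ := by
    rw [w1Fun_one_div hμ2]
    exact one_div_le_one_div_of_le hμ2 (by linarith)
  have hf : 1 / μ₂ ≤ f1Fun μ₁ μ₂ ρ (1 / μ₂) := by
    rw [f1Fun_one_div hμ1 hμ2, div_le_div_iff₀ hμ2 hμ1]
    linarith
  refine ⟨⟨⟨1 / μ₂, 1 / μ₂, by positivity, by positivity, (hattain _ hw hf).symm⟩, ?_⟩,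
    g2Fun_one_div hμ2, hattain⟩
  rintro v ⟨t, s, ht, hs, rfl⟩
  exact (four_mul_le_g2Fun hs).trans (g2Fun_le_gFun hμ2.le ht hs hρl hρu)
end

section
/- Suppose −1 < ρ < 0 and μ₂ + ρμ₁ − 2μ₂ρ² ≤ 0. Then the infimum of g₃(t,s) over the region B̄ = {(t,s) : 0 < t ≤ s} equals 4(μ₁+(1−2ρ)μ₂), and (1/(μ₁−2ρμ₂), (1−2ρ)/μ₂) is the unique minimizer of g₃ on B̄. -/
open Matrix

/-!
For `t ≤ s` the quadratic form of the inverse covariance splits as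
`x²/t + (y - ρx)²/(s - ρ²t)` (a Schur complement), and completing both squares at the corner `(1 + μ₁t, 1 + μ₂s)` gives, with `α = μ₁ - 2ρμ₂`,
`g₃(t,s) = 4(μ₁ + (1-2ρ)μ₂) + (1 - αt)²/t + (1 - ρ(1 + αt) - μ₂s)²/(s - ρ²t)`.
Both squares vanish exactly at `t = 1/α`, `s = (1-2ρ)/μ₂`, and the hypothesis
`μ₂ + ρμ₁ - 2μ₂ρ² ≤ 0` is what puts this point in the region `t ≤ s`.
-/

lemma covM_det_of_le (ρ : ℝ) {t s : ℝ} (hts : t ≤ s) :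
    (covM ρ t s).det = t * (s - ρ ^ 2 * t) := by
  simp only [covM, det_fin_two_of, min_eq_left hts]
  ring

lemma quadF_eq_of_le (ρ x y : ℝ) {t s : ℝ} (hts : t ≤ s) (ht : t ≠ 0)
    (hu : s - ρ ^ 2 * t ≠ 0) :
    quadF ρ t s x y = x ^ 2 / t + (y - ρ * x) ^ 2 / (s - ρ ^ 2 * t) := by
  have hinv : (covM ρ t s)⁻¹ = (t * (s - ρ ^ 2 * t))⁻¹ • !![s, -(ρ * t); -(ρ * t), t] := by
    rw [inv_def, covM_det_of_le ρ hts, Ring.inverse_eq_inv']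
    simp [covM, adjugate_fin_two_of, min_eq_left hts]
  rw [quadF, hinv]
  simp only [dotProduct, mulVec, Matrix.smul_apply, of_apply, cons_val', cons_val_fin_one,
    smul_eq_mul, Fin.sum_univ_two, cons_val_zero, cons_val_one]
  rw [div_add_div _ _ ht hu, div_eq_inv_mul]
  ring

section

variable (μ₁ μ₂ ρ : ℝ)

lemma g3Fun_eq_of_le {t s : ℝ} (hts : t ≤ s) (ht : t ≠ 0) (hu : s - ρ ^ 2 * t ≠ 0) :
    g3Fun μ₁ μ₂ ρ t s = 4 * (μ₁ + (1 - 2 * ρ) * μ₂) + (1 - (μ₁ - 2 * ρ * μ₂) * t) ^ 2 / t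
      + (1 - ρ * (1 + (μ₁ - 2 * ρ * μ₂) * t) - μ₂ * s) ^ 2 / (s - ρ ^ 2 * t) := by
  rw [g3Fun, quadF_eq_of_le ρ _ _ hts ht hu, add_assoc, div_add_div _ _ ht hu,
    div_add_div _ _ ht hu, add_div' _ _ _ (mul_ne_zero ht hu)]
  congr 1
  ring

variable {μ₁ μ₂ ρ}

lemma le_g3Fun (hρ : ρ ^ 2 < 1) {t s : ℝ} (ht : 0 < t) (hts : t ≤ s) :
    4 * (μ₁ + (1 - 2 * ρ) * μ₂) ≤ g3Fun μ₁ μ₂ ρ t s := by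
  have hu : 0 < s - ρ ^ 2 * t := by nlinarith
  rw [g3Fun_eq_of_le μ₁ μ₂ ρ hts ht.ne' hu.ne', add_assoc, le_add_iff_nonneg_right]
  positivity

lemma g3Fun_eq_iff (hρ : ρ ^ 2 < 1) {t s : ℝ} (ht : 0 < t) (hts : t ≤ s) :
    g3Fun μ₁ μ₂ ρ t s = 4 * (μ₁ + (1 - 2 * ρ) * μ₂) ↔
      (μ₁ - 2 * ρ * μ₂) * t = 1 ∧ μ₂ * s = 1 - 2 * ρ := by
  have hu : 0 < s - ρ ^ 2 * t := by nlinarith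
  rw [g3Fun_eq_of_le μ₁ μ₂ ρ hts ht.ne' hu.ne', add_assoc, add_eq_left,
    add_eq_zero_iff_of_nonneg (by positivity) (by positivity),
    div_eq_zero_iff, div_eq_zero_iff, or_iff_left ht.ne', or_iff_left hu.ne',
    sq_eq_zero_iff, sq_eq_zero_iff]
  constructor
  · rintro ⟨h₁, h₂⟩
    exact ⟨by linarith, by linear_combination ρ * h₁ - h₂⟩
  · rintro ⟨h₁, h₂⟩
    exact ⟨by linarith, by linear_combination -ρ * h₁ - h₂⟩

end

theorem stmt11 (μ₁ μ₂ ρ : ℝ) (hμ1 : 0 < μ₁) (hμ12 : μ₁ ≤ μ₂)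
    (hρl : -1 < ρ) (hρu : ρ < 0)
    (hcond : μ₂ + ρ * μ₁ - 2 * μ₂ * ρ ^ 2 ≤ 0) :
    IsLeast { v : ℝ | ∃ t s : ℝ, 0 < t ∧ t ≤ s ∧ v = g3Fun μ₁ μ₂ ρ t s }
      (4 * (μ₁ + (1 - 2 * ρ) * μ₂)) ∧
    (g3Fun μ₁ μ₂ ρ (1 / (μ₁ - 2 * ρ * μ₂)) ((1 - 2 * ρ) / μ₂)
        = 4 * (μ₁ + (1 - 2 * ρ) * μ₂)) ∧
    (∀ t s : ℝ, 0 < t → t ≤ s →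
      g3Fun μ₁ μ₂ ρ t s = 4 * (μ₁ + (1 - 2 * ρ) * μ₂) →
      t = 1 / (μ₁ - 2 * ρ * μ₂) ∧ s = (1 - 2 * ρ) / μ₂) := by
  have hμ2 : 0 < μ₂ := hμ1.trans_le hμ12
  have hρ : ρ ^ 2 < 1 := by nlinarith
  have hα : 0 < μ₁ - 2 * ρ * μ₂ := by nlinarith
  have ht₀ : 0 < 1 / (μ₁ - 2 * ρ * μ₂) := by positivity
  -- `(1 - 2ρ)(μ₁ - 2ρμ₂) - μ₂ = μ₁ + (1 - 2ρ)μ₂ - 2(μ₂ + ρμ₁ - 2μ₂ρ²) > 0`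
  have hts₀ : 1 / (μ₁ - 2 * ρ * μ₂) ≤ (1 - 2 * ρ) / μ₂ := by
    rw [div_le_div_iff₀ hα hμ2]
    nlinarith
  have hval : g3Fun μ₁ μ₂ ρ (1 / (μ₁ - 2 * ρ * μ₂)) ((1 - 2 * ρ) / μ₂)
      = 4 * (μ₁ + (1 - 2 * ρ) * μ₂) :=
    (g3Fun_eq_iff hρ ht₀ hts₀).2 ⟨mul_one_div_cancel hα.ne', mul_div_cancel₀ _ hμ2.ne'⟩
  refine ⟨⟨⟨_, _, ht₀, hts₀, hval.symm⟩, ?_⟩, hval, fun t s ht hts heq => ?_⟩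
  · rintro v ⟨t, s, ht, hts, rfl⟩
    exact le_g3Fun hρ ht hts
  · obtain ⟨h₁, h₂⟩ := (g3Fun_eq_iff hρ ht hts).1 heq
    exact ⟨eq_one_div_of_mul_eq_one_right h₁, eq_div_of_mul_eq hμ2.ne' (by linarith)⟩
end

section
/- The function ρ ↦ t*(ρ) = √(2(1−ρ)/(μ₁²+μ₂²−2ρμ₁μ₂)) is nonincreasing on [0,1), and is strictly decreasing there when μ₁ < μ₂. Moreover, if μ₁ < μ₂, then both ρ ↦ t_B(ρ) = 1/(2ρμ₂−μ₁) and ρ ↦ s₁*(ρ) = (1−ρ)/(ρμ₂−μ₁) are strictly decreasing on the interval (μ₁/μ₂, 1). -/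
/-!
All three functions are built from quotients `(1 - ρ) / (p + q ρ)` with an affine denominator,
positive on the relevant interval. Cross-multiplying, such a quotient is nonincreasing exactly
when the denominator is nonnegative at `ρ = 1`, i.e. `p + q ≥ 0`, and strictly decreasing when
`p + q > 0`. For `t*` the denominator at `ρ = 1` is `(μ₁ - μ₂)²` and for `s₁*` it is `μ₂ - μ₁`;
`t_B` is the reciprocal of an increasing affine function.
-/

noncomputable def tStar (μ₁ μ₂ ρ : ℝ) : ℝ :=
  Real.sqrt (2 * (1 - ρ) / (μ₁ ^ 2 + μ₂ ^ 2 - 2 * ρ * μ₁ * μ₂))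

noncomputable def tB (μ₁ μ₂ ρ : ℝ) : ℝ := 1 / (2 * ρ * μ₂ - μ₁)

noncomputable def s1Star (μ₁ μ₂ ρ : ℝ) : ℝ := (1 - ρ) / (ρ * μ₂ - μ₁)

section AffineQuotient

variable {p q ρ₁ ρ₂ : ℝ}

lemma one_sub_div_affine_le_of_le (hpq : 0 ≤ p + q) (h₁ : 0 < p + q * ρ₁)
    (h₂ : 0 < p + q * ρ₂) (h : ρ₁ ≤ ρ₂) :
    (1 - ρ₂) / (p + q * ρ₂) ≤ (1 - ρ₁) / (p + q * ρ₁) := by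
  rw [div_le_div_iff₀ h₂ h₁]
  nlinarith [mul_nonneg hpq (sub_nonneg.2 h)]

lemma one_sub_div_affine_lt_of_lt (hpq : 0 < p + q) (h₁ : 0 < p + q * ρ₁)
    (h₂ : 0 < p + q * ρ₂) (h : ρ₁ < ρ₂) :
    (1 - ρ₂) / (p + q * ρ₂) < (1 - ρ₁) / (p + q * ρ₁) := by
  rw [div_lt_div_iff₀ h₂ h₁]
  nlinarith [mul_pos hpq (sub_pos.2 h)]

end AffineQuotient

section Thresholds

variable {μ₁ μ₂ ρ ρ₁ ρ₂ : ℝ}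

lemma tStar_eq (μ₁ μ₂ ρ : ℝ) :
    tStar μ₁ μ₂ ρ =
      √(2 * ((1 - ρ) / ((μ₁ ^ 2 + μ₂ ^ 2) + (-2 * μ₁ * μ₂) * ρ))) := by
  rw [tStar, mul_div_assoc]
  ring_nf

lemma tStar_denom_pos (hμ : 0 < μ₁ * μ₂) (hρ : ρ < 1) :
    0 < (μ₁ ^ 2 + μ₂ ^ 2) + (-2 * μ₁ * μ₂) * ρ := by
  nlinarith [sq_nonneg (μ₁ - μ₂)]

lemma tStar_le_tStar (hμ : 0 < μ₁ * μ₂) (h : ρ₁ ≤ ρ₂) (hρ₂ : ρ₂ < 1) :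
    tStar μ₁ μ₂ ρ₂ ≤ tStar μ₁ μ₂ ρ₁ := by
  rw [tStar_eq, tStar_eq]
  refine Real.sqrt_le_sqrt (mul_le_mul_of_nonneg_left ?_ zero_le_two)
  exact one_sub_div_affine_le_of_le (by nlinarith [sq_nonneg (μ₁ - μ₂)])
    (tStar_denom_pos hμ (h.trans_lt hρ₂)) (tStar_denom_pos hμ hρ₂) h

lemma tStar_lt_tStar (hμ : 0 < μ₁ * μ₂) (hne : μ₁ ≠ μ₂) (h : ρ₁ < ρ₂) (hρ₂ : ρ₂ < 1) :
    tStar μ₁ μ₂ ρ₂ < tStar μ₁ μ₂ ρ₁ := by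
  have hpq : 0 < (μ₁ ^ 2 + μ₂ ^ 2) + -2 * μ₁ * μ₂ := by
    nlinarith [sq_pos_of_ne_zero (sub_ne_zero.2 hne)]
  have h₂ := tStar_denom_pos hμ hρ₂
  rw [tStar_eq, tStar_eq]
  refine Real.sqrt_lt_sqrt (mul_nonneg zero_le_two (div_nonneg (by linarith) h₂.le)) ?_
  exact mul_lt_mul_of_pos_left
    (one_sub_div_affine_lt_of_lt hpq (tStar_denom_pos hμ (h.trans hρ₂)) h₂ h) two_pos

lemma tB_lt_tB (hμ₂ : 0 < μ₂) (h₁ : 0 < 2 * ρ₁ * μ₂ - μ₁) (h : ρ₁ < ρ₂) :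
    tB μ₁ μ₂ ρ₂ < tB μ₁ μ₂ ρ₁ :=
  one_div_lt_one_div_of_lt h₁ (by nlinarith)

lemma s1Star_eq (μ₁ μ₂ ρ : ℝ) : s1Star μ₁ μ₂ ρ = (1 - ρ) / (-μ₁ + μ₂ * ρ) := by
  rw [s1Star]
  ring_nf

lemma s1Star_lt_s1Star (hμ : μ₁ < μ₂) (hμ₂ : 0 < μ₂) (h₁ : 0 < ρ₁ * μ₂ - μ₁) (h : ρ₁ < ρ₂) :
    s1Star μ₁ μ₂ ρ₂ < s1Star μ₁ μ₂ ρ₁ := by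
  rw [s1Star_eq, s1Star_eq]
  exact one_sub_div_affine_lt_of_lt (by linarith) (by linarith) (by nlinarith) h

end Thresholds

theorem stmt12 (μ₁ μ₂ : ℝ) (hμ1 : 0 < μ₁) (hμ12 : μ₁ ≤ μ₂) :
    (∀ ρ₁ ρ₂ : ℝ, 0 ≤ ρ₁ → ρ₁ ≤ ρ₂ → ρ₂ < 1 → tStar μ₁ μ₂ ρ₂ ≤ tStar μ₁ μ₂ ρ₁) ∧
    (μ₁ < μ₂ → ∀ ρ₁ ρ₂ : ℝ, 0 ≤ ρ₁ → ρ₁ < ρ₂ → ρ₂ < 1 →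
      tStar μ₁ μ₂ ρ₂ < tStar μ₁ μ₂ ρ₁) ∧
    (μ₁ < μ₂ → ∀ ρ₁ ρ₂ : ℝ, μ₁ / μ₂ < ρ₁ → ρ₁ < ρ₂ → ρ₂ < 1 →
      tB μ₁ μ₂ ρ₂ < tB μ₁ μ₂ ρ₁) ∧
    (μ₁ < μ₂ → ∀ ρ₁ ρ₂ : ℝ, μ₁ / μ₂ < ρ₁ → ρ₁ < ρ₂ → ρ₂ < 1 →
      s1Star μ₁ μ₂ ρ₂ < s1Star μ₁ μ₂ ρ₁) := by
  have hμ2 : 0 < μ₂ := hμ1.trans_le hμ12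
  have hμ : 0 < μ₁ * μ₂ := mul_pos hμ1 hμ2
  refine ⟨fun ρ₁ ρ₂ _ h hρ₂ => tStar_le_tStar hμ h hρ₂,
    fun hlt ρ₁ ρ₂ _ h hρ₂ => tStar_lt_tStar hμ hlt.ne h hρ₂,
    fun _ ρ₁ ρ₂ hρ₁ h _ => ?_, fun hlt ρ₁ ρ₂ hρ₁ h _ => ?_⟩
  · have : μ₁ < ρ₁ * μ₂ := (div_lt_iff₀ hμ2).1 hρ₁
    exact tB_lt_tB hμ2 (by linarith) h
  · have : μ₁ < ρ₁ * μ₂ := (div_lt_iff₀ hμ2).1 hρ₁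
    exact s1Star_lt_s1Star hlt hμ2 (by linarith) h
end

section
/- Suppose 0 ≤ ρ and ρμ₂ ≤ μ₁. Then t*(ρ) ≥ t**(ρ), and (1−ρ)·|μ₁−2ρμ₂| ≤ μ₂+ρμ₁−2μ₂ρ² (i.e., t_B(ρ) = 1/|μ₁−2ρμ₂| ≥ t**(ρ) whenever μ₁ ≠ 2ρμ₂). In each inequality, equality holds only when ρ = 0 and μ₁ = μ₂. -/
noncomputable def tDStar (μ₁ μ₂ ρ : ℝ) : ℝ :=
  (1 - ρ) / (μ₂ + ρ * μ₁ - 2 * μ₂ * ρ ^ 2)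

section

variable {μ₁ μ₂ ρ : ℝ}

lemma sq_add_sq_sub_two_mul_eq (μ₁ μ₂ ρ : ℝ) :
    μ₁ ^ 2 + μ₂ ^ 2 - 2 * ρ * μ₁ * μ₂ =
      (μ₂ + ρ * μ₁ - 2 * μ₂ * ρ ^ 2) ^ 2 + (1 - ρ ^ 2) * (μ₁ - 2 * ρ * μ₂) ^ 2 := by
  ring

lemma sq_add_sq_sub_two_mul_pos (hρl : -1 < ρ) (hρu : ρ < 1)
    (hD : 0 < μ₂ + ρ * μ₁ - 2 * μ₂ * ρ ^ 2) :
    0 < μ₁ ^ 2 + μ₂ ^ 2 - 2 * ρ * μ₁ * μ₂ := by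
  have : 0 < 1 - ρ ^ 2 := by nlinarith
  rw [sq_add_sq_sub_two_mul_eq]
  positivity

lemma tStar_sq_sub_tDStar_sq (hρl : -1 < ρ) (hρu : ρ < 1)
    (hD : 0 < μ₂ + ρ * μ₁ - 2 * μ₂ * ρ ^ 2) :
    tStar μ₁ μ₂ ρ ^ 2 - tDStar μ₁ μ₂ ρ ^ 2 =
      (1 - ρ ^ 2) / ((μ₁ ^ 2 + μ₂ ^ 2 - 2 * ρ * μ₁ * μ₂) * (μ₂ + ρ * μ₁ - 2 * μ₂ * ρ ^ 2) ^ 2) *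
        ((μ₂ + ρ * μ₁ - 2 * μ₂ * ρ ^ 2) ^ 2 - ((1 - ρ) * |μ₁ - 2 * ρ * μ₂|) ^ 2) := by
  have hQ := sq_add_sq_sub_two_mul_pos hρl hρu hD
  unfold tStar tDStar
  rw [Real.sq_sqrt (div_nonneg (by linarith) hQ.le), mul_pow, sq_abs]
  rw [sq_add_sq_sub_two_mul_eq] at hQ ⊢
  generalize μ₂ + ρ * μ₁ - 2 * μ₂ * ρ ^ 2 = D at hD hQ ⊢
  field_simp
  ring

lemma tStar_sq_sub_tDStar_sq_factor_pos (hρl : -1 < ρ) (hρu : ρ < 1)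
    (hD : 0 < μ₂ + ρ * μ₁ - 2 * μ₂ * ρ ^ 2) :
    0 < (1 - ρ ^ 2) /
      ((μ₁ ^ 2 + μ₂ ^ 2 - 2 * ρ * μ₁ * μ₂) * (μ₂ + ρ * μ₁ - 2 * μ₂ * ρ ^ 2) ^ 2) := by
  have := sq_add_sq_sub_two_mul_pos hρl hρu hD
  exact div_pos (by nlinarith) (by positivity)

lemma tDStar_le_tStar_iff (hρl : -1 < ρ) (hρu : ρ < 1)
    (hD : 0 < μ₂ + ρ * μ₁ - 2 * μ₂ * ρ ^ 2) :
    tDStar μ₁ μ₂ ρ ≤ tStar μ₁ μ₂ ρ ↔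
      (1 - ρ) * |μ₁ - 2 * ρ * μ₂| ≤ μ₂ + ρ * μ₁ - 2 * μ₂ * ρ ^ 2 := by
  rw [← sq_le_sq₀ (a := tDStar μ₁ μ₂ ρ) (b := tStar μ₁ μ₂ ρ)
      (div_nonneg (by linarith) hD.le) (Real.sqrt_nonneg _),
    ← sub_nonneg, tStar_sq_sub_tDStar_sq hρl hρu hD,
    mul_nonneg_iff_of_pos_left (tStar_sq_sub_tDStar_sq_factor_pos hρl hρu hD), sub_nonneg,
    sq_le_sq₀ (by nlinarith [abs_nonneg (μ₁ - 2 * ρ * μ₂)]) hD.le]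

lemma tDStar_eq_tStar_iff (hρl : -1 < ρ) (hρu : ρ < 1)
    (hD : 0 < μ₂ + ρ * μ₁ - 2 * μ₂ * ρ ^ 2) :
    tDStar μ₁ μ₂ ρ = tStar μ₁ μ₂ ρ ↔
      (1 - ρ) * |μ₁ - 2 * ρ * μ₂| = μ₂ + ρ * μ₁ - 2 * μ₂ * ρ ^ 2 := by
  rw [← sq_eq_sq₀ (a := tDStar μ₁ μ₂ ρ) (b := tStar μ₁ μ₂ ρ)
      (div_nonneg (by linarith) hD.le) (Real.sqrt_nonneg _),
    eq_comm, ← sub_eq_zero, tStar_sq_sub_tDStar_sq hρl hρu hD,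
    mul_eq_zero_iff_left (tStar_sq_sub_tDStar_sq_factor_pos hρl hρu hD).ne', sub_eq_zero,
    sq_eq_sq₀ hD.le (by nlinarith [abs_nonneg (μ₁ - 2 * ρ * μ₂)]), eq_comm]

lemma one_sub_mul_abs_le_and_eq_imp (hμ₂ : 0 < μ₂) (hμ₁₂ : μ₁ ≤ μ₂) (hρ₀ : 0 ≤ ρ) (hρu : ρ < 1)
    (hρμ : ρ * μ₂ ≤ μ₁) :
    (1 - ρ) * |μ₁ - 2 * ρ * μ₂| ≤ μ₂ + ρ * μ₁ - 2 * μ₂ * ρ ^ 2 ∧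
      ((1 - ρ) * |μ₁ - 2 * ρ * μ₂| = μ₂ + ρ * μ₁ - 2 * μ₂ * ρ ^ 2 → ρ = 0 ∧ μ₁ = μ₂) := by
  have he : 0 < μ₁ + μ₂ - 2 * ρ * μ₂ := by nlinarith [mul_pos (sub_pos.2 hρu) hμ₂]
  have hρe : 0 ≤ ρ * (μ₁ + μ₂ - 2 * ρ * μ₂) := mul_nonneg hρ₀ he.le
  have h_add : μ₂ + ρ * μ₁ - 2 * μ₂ * ρ ^ 2 + (1 - ρ) * (μ₁ - 2 * ρ * μ₂) =
      μ₁ + μ₂ - 2 * ρ * μ₂ := by ring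
  have h_sub : μ₂ + ρ * μ₁ - 2 * μ₂ * ρ ^ 2 - (1 - ρ) * (μ₁ - 2 * ρ * μ₂) =
      μ₂ - μ₁ + 2 * (ρ * (μ₁ + μ₂ - 2 * ρ * μ₂)) := by ring
  rcases abs_cases (μ₁ - 2 * ρ * μ₂) with ⟨habs, -⟩ | ⟨habs, -⟩ <;> rw [habs]
  · refine ⟨by linarith, fun h => ?_⟩
    obtain hρ | he0 := mul_eq_zero.1 (show ρ * (μ₁ + μ₂ - 2 * ρ * μ₂) = 0 by linarith)
    · exact ⟨hρ, by linarith⟩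
    · exact absurd he0 he.ne'
  · exact ⟨by linarith, fun h => by linarith⟩

lemma denom_tDStar_pos (hμ₂ : 0 < μ₂) (hρ₀ : 0 ≤ ρ) (hρu : ρ < 1) (hρμ : ρ * μ₂ ≤ μ₁) :
    0 < μ₂ + ρ * μ₁ - 2 * μ₂ * ρ ^ 2 := by
  have h1ρ : 0 < (1 - ρ) * (1 + ρ) := mul_pos (by linarith) (by linarith)
  nlinarith [mul_nonneg hρ₀ (sub_nonneg.2 hρμ), mul_pos hμ₂ h1ρ]

end

theorem stmt13 (μ₁ μ₂ ρ : ℝ) (hμ1 : 0 < μ₁) (hμ12 : μ₁ ≤ μ₂)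
    (hρl : -1 < ρ) (hρu : ρ < 1) (hρ0 : 0 ≤ ρ) (hρμ : ρ * μ₂ ≤ μ₁) :
    tDStar μ₁ μ₂ ρ ≤ tStar μ₁ μ₂ ρ ∧
    (1 - ρ) * |μ₁ - 2 * ρ * μ₂| ≤ μ₂ + ρ * μ₁ - 2 * μ₂ * ρ ^ 2 ∧
    (μ₁ ≠ 2 * ρ * μ₂ → tDStar μ₁ μ₂ ρ ≤ 1 / |μ₁ - 2 * ρ * μ₂|) ∧
    (tDStar μ₁ μ₂ ρ = tStar μ₁ μ₂ ρ → ρ = 0 ∧ μ₁ = μ₂) ∧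
    ((1 - ρ) * |μ₁ - 2 * ρ * μ₂| = μ₂ + ρ * μ₁ - 2 * μ₂ * ρ ^ 2 → ρ = 0 ∧ μ₁ = μ₂) := by
  have hμ2 : 0 < μ₂ := hμ1.trans_le hμ12
  have hD := denom_tDStar_pos hμ2 hρ0 hρu hρμ
  obtain ⟨hle, heq⟩ := one_sub_mul_abs_le_and_eq_imp hμ2 hμ12 hρ0 hρu hρμ
  refine ⟨(tDStar_le_tStar_iff hρl hρu hD).2 hle, hle, fun hne => ?_,
    fun h => heq ((tDStar_eq_tStar_iff hρl hρu hD).1 h), heq⟩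
  rw [tDStar, div_le_div_iff₀ hD (abs_pos.2 (sub_ne_zero.2 hne))]
  linarith
end

section
/- Suppose μ₁ < μ₂. Then t*(ρ̂₂) = t_B(ρ̂₂) = s₁*(ρ̂₂) = t**(ρ̂₂) = 1/μ₂. Moreover, for all ρ ∈ (μ₁/μ₂, ρ̂₂) one has t*(ρ) < s₁*(ρ) and t_B(ρ) < s₁*(ρ), while for all ρ ∈ (ρ̂₂, 1) one has t*(ρ) > s₁*(ρ) and t_B(ρ) > s₁*(ρ). -/
/-!
Write `ρ̂ = (μ₁ + μ₂) / (2μ₂)`, so that `μ₁ + μ₂ - 2ρμ₂ = 2μ₂(ρ̂ - ρ)`. At `ρ = ρ̂` every denominator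
collapses (`ρ̂μ₂ - μ₁ = (μ₂ - μ₁)/2`, `2ρ̂μ₂ - μ₁ = μ₂`), which gives the common value `1/μ₂`.
For the comparisons, both `s₁* - t_B` and `s₁*² - t*²` factor as `μ₁ + μ₂ - 2ρμ₂` times a quantity
that is positive on `(μ₁/μ₂, 1)`; since `s₁* + t* > 0` there, the sign of `s₁* - t*` is that of
`s₁*² - t*²`. So both differences change sign exactly at `ρ̂`.
-/

open SignType

lemma sign_sub_eq_sign_sq_sub_sq {α : Type*} [CommRing α] [LinearOrder α] [IsStrictOrderedRing α]
    {a b : α} (h : 0 < a + b) : sign (a - b) = sign (a ^ 2 - b ^ 2) := by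
  rw [sq_sub_sq, sign_mul, sign_pos h, one_mul]

section

variable {μ₁ μ₂ : ℝ}

lemma one_sub_rhoHat (hμ₂ : μ₂ ≠ 0) : 1 - (μ₁ + μ₂) / (2 * μ₂) = (μ₂ - μ₁) / (2 * μ₂) := by
  field_simp
  ring

lemma rhoHat_mul_sub (hμ₂ : μ₂ ≠ 0) : (μ₁ + μ₂) / (2 * μ₂) * μ₂ - μ₁ = (μ₂ - μ₁) / 2 := by
  field_simp
  ring

lemma tB_rhoHat (hμ₂ : μ₂ ≠ 0) : tB μ₁ μ₂ ((μ₁ + μ₂) / (2 * μ₂)) = 1 / μ₂ := by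
  unfold tB
  congr 1
  field_simp
  ring

lemma s1Star_rhoHat (hμ₂ : μ₂ ≠ 0) (hμ₁₂ : μ₁ ≠ μ₂) :
    s1Star μ₁ μ₂ ((μ₁ + μ₂) / (2 * μ₂)) = 1 / μ₂ := by
  rw [s1Star, one_sub_rhoHat hμ₂, rhoHat_mul_sub hμ₂]
  field_simp

lemma tDStar_rhoHat (hμ₂ : μ₂ ≠ 0) (hμ₁₂ : μ₁ ≠ μ₂) :
    tDStar μ₁ μ₂ ((μ₁ + μ₂) / (2 * μ₂)) = 1 / μ₂ := by
  have hden : μ₂ + (μ₁ + μ₂) / (2 * μ₂) * μ₁ - 2 * μ₂ * ((μ₁ + μ₂) / (2 * μ₂)) ^ 2 =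
      (μ₂ - μ₁) / 2 := by
    field_simp
    ring
  rw [tDStar, one_sub_rhoHat hμ₂, hden]
  field_simp

lemma tStar_rhoHat (hμ₂ : 0 < μ₂) (hμ₁₂ : μ₁ ≠ μ₂) :
    tStar μ₁ μ₂ ((μ₁ + μ₂) / (2 * μ₂)) = 1 / μ₂ := by
  have hD : μ₁ ^ 2 + μ₂ ^ 2 - 2 * ((μ₁ + μ₂) / (2 * μ₂)) * μ₁ * μ₂ = μ₂ * (μ₂ - μ₁) := by
    field_simp
    ring
  have harg : 2 * ((μ₂ - μ₁) / (2 * μ₂)) / (μ₂ * (μ₂ - μ₁)) = (1 / μ₂) ^ 2 := by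
    field_simp
  rw [tStar, one_sub_rhoHat hμ₂.ne', hD, harg, Real.sqrt_sq (by positivity)]

variable {ρ : ℝ}

lemma s1Star_sub_tB (h₁ : ρ * μ₂ - μ₁ ≠ 0) (h₂ : 2 * ρ * μ₂ - μ₁ ≠ 0) :
    s1Star μ₁ μ₂ ρ - tB μ₁ μ₂ ρ =
      (μ₁ + μ₂ - 2 * ρ * μ₂) * (ρ / ((ρ * μ₂ - μ₁) * (2 * ρ * μ₂ - μ₁))) := by
  rw [s1Star, tB, div_sub_div _ _ h₁ h₂, mul_div_assoc']
  congr 1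
  ring

lemma s1Star_sq_sub_tStar_sq (h₁ : ρ * μ₂ - μ₁ ≠ 0) (hρ : ρ ≤ 1)
    (hD : 0 < μ₁ ^ 2 + μ₂ ^ 2 - 2 * ρ * μ₁ * μ₂) :
    s1Star μ₁ μ₂ ρ ^ 2 - tStar μ₁ μ₂ ρ ^ 2 =
      (μ₁ + μ₂ - 2 * ρ * μ₂) * ((1 - ρ ^ 2) * (μ₂ - μ₁) /
        ((ρ * μ₂ - μ₁) ^ 2 * (μ₁ ^ 2 + μ₂ ^ 2 - 2 * ρ * μ₁ * μ₂))) := by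
  unfold s1Star tStar
  rw [Real.sq_sqrt (div_nonneg (by linarith) hD.le), div_pow,
    div_sub_div _ _ (pow_ne_zero 2 h₁) hD.ne', mul_div_assoc']
  congr 1
  ring

lemma sign_s1Star_sub_tB (hμ₁ : 0 ≤ μ₁) (hρ : 0 < ρ) (h : μ₁ < ρ * μ₂) :
    sign (s1Star μ₁ μ₂ ρ - tB μ₁ μ₂ ρ) = sign (μ₁ + μ₂ - 2 * ρ * μ₂) := by
  have h₁ : 0 < ρ * μ₂ - μ₁ := by linarith
  have h₂ : 0 < 2 * ρ * μ₂ - μ₁ := by linarith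
  rw [s1Star_sub_tB h₁.ne' h₂.ne', sign_mul, sign_pos (div_pos hρ (mul_pos h₁ h₂)), mul_one]

lemma sign_s1Star_sub_tStar (hμ₁ : 0 < μ₁) (hμ₁₂ : μ₁ < μ₂) (h : μ₁ < ρ * μ₂) (hρ : ρ < 1) :
    sign (s1Star μ₁ μ₂ ρ - tStar μ₁ μ₂ ρ) = sign (μ₁ + μ₂ - 2 * ρ * μ₂) := by
  have hμ₂ : 0 < μ₂ := hμ₁.trans hμ₁₂
  have hρ₀ : 0 < ρ := pos_of_mul_pos_left (hμ₁.trans h) hμ₂.le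
  have h₁ : 0 < ρ * μ₂ - μ₁ := by linarith
  -- the left side is `(μ₂ - μ₁)² + 2(1 - ρ)μ₁μ₂`
  have hD : 0 < μ₁ ^ 2 + μ₂ ^ 2 - 2 * ρ * μ₁ * μ₂ := by
    nlinarith [mul_pos (mul_pos hμ₁ hμ₂) (sub_pos.2 hρ), sq_nonneg (μ₂ - μ₁)]
  have hsum : 0 < s1Star μ₁ μ₂ ρ + tStar μ₁ μ₂ ρ :=
    add_pos_of_pos_of_nonneg (div_pos (by linarith) h₁) (Real.sqrt_nonneg _)
  have hc : 0 < (1 - ρ ^ 2) * (μ₂ - μ₁) /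
      ((ρ * μ₂ - μ₁) ^ 2 * (μ₁ ^ 2 + μ₂ ^ 2 - 2 * ρ * μ₁ * μ₂)) :=
    div_pos (mul_pos (by nlinarith) (by linarith)) (by positivity)
  rw [sign_sub_eq_sign_sq_sub_sq hsum, s1Star_sq_sub_tStar_sq h₁.ne' hρ.le hD, sign_mul,
    sign_pos hc, mul_one]

end

theorem stmt14 (μ₁ μ₂ : ℝ) (hμ1 : 0 < μ₁) (hμ12 : μ₁ < μ₂) :
    (tStar μ₁ μ₂ ((μ₁ + μ₂) / (2 * μ₂)) = 1 / μ₂ ∧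
     tB μ₁ μ₂ ((μ₁ + μ₂) / (2 * μ₂)) = 1 / μ₂ ∧
     s1Star μ₁ μ₂ ((μ₁ + μ₂) / (2 * μ₂)) = 1 / μ₂ ∧
     tDStar μ₁ μ₂ ((μ₁ + μ₂) / (2 * μ₂)) = 1 / μ₂) ∧
    (∀ ρ : ℝ, μ₁ / μ₂ < ρ → ρ < (μ₁ + μ₂) / (2 * μ₂) →
      tStar μ₁ μ₂ ρ < s1Star μ₁ μ₂ ρ ∧ tB μ₁ μ₂ ρ < s1Star μ₁ μ₂ ρ) ∧
    (∀ ρ : ℝ, (μ₁ + μ₂) / (2 * μ₂) < ρ → ρ < 1 →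
      s1Star μ₁ μ₂ ρ < tStar μ₁ μ₂ ρ ∧ s1Star μ₁ μ₂ ρ < tB μ₁ μ₂ ρ) := by
  have hμ2 : 0 < μ₂ := hμ1.trans hμ12
  refine ⟨⟨tStar_rhoHat hμ2 hμ12.ne, tB_rhoHat hμ2.ne', s1Star_rhoHat hμ2.ne' hμ12.ne,
    tDStar_rhoHat hμ2.ne' hμ12.ne⟩, fun ρ hlo hhi => ?_, fun ρ hlo hhi => ?_⟩
  · rw [div_lt_iff₀ hμ2] at hlo
    rw [lt_div_iff₀ (by positivity)] at hhi
    have hρ₀ : 0 < ρ := pos_of_mul_pos_left (hμ1.trans hlo) hμ2.le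
    have hρ₁ : ρ < 1 := by nlinarith
    have hsign : sign (μ₁ + μ₂ - 2 * ρ * μ₂) = 1 := sign_pos (by linarith)
    exact ⟨sub_pos.1 <| sign_eq_one_iff.1 <| by
        rw [sign_s1Star_sub_tStar hμ1 hμ12 hlo hρ₁, hsign],
      sub_pos.1 <| sign_eq_one_iff.1 <| by rw [sign_s1Star_sub_tB hμ1.le hρ₀ hlo, hsign]⟩
  · rw [div_lt_iff₀ (by positivity)] at hlo
    have hρ₀ : 0 < ρ := by nlinarith
    have hlo' : μ₁ < ρ * μ₂ := by linarith
    have hsign : sign (μ₁ + μ₂ - 2 * ρ * μ₂) = -1 := sign_neg (by linarith)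
    exact ⟨sub_neg.1 <| sign_eq_neg_one_iff.1 <| by
        rw [sign_s1Star_sub_tStar hμ1 hμ12 hlo' hhi, hsign],
      sub_neg.1 <| sign_eq_neg_one_iff.1 <| by rw [sign_s1Star_sub_tB hμ1.le hρ₀ hlo', hsign]⟩
end
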